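/- arXiv:2108.08588 — 3 statements merged into one kernel-verified Lean document; each statement's English description precedes it below -/
import Mathlib

section
/- For any mixed metric generator M of the web graph W_n (n ≥ 4), M contains at least one vertex from the inner cycle {p_1, ..., p_n}. -/
/-- Vertices of the prism allied graph `Dₙᵗ`. -/
inductive DtV (n : ℕ) : Type
  | p : Fin n → DtV n
  | q : Fin n → DtV n
  | r : Fin n → DtV n
  | s : Fin n → DtV n
  deriving DecidableEq


/-- Cyclic successor on `Fin n` (indices mod `n`). -/
def finSucc {n : ℕ} (i : Fin n) : Fin n :=
  ⟨(i.val + 1) % n, Nat.mod_lt _ (Nat.lt_of_le_of_lt (Nat.zero_le _) i.isLt)⟩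

/-- Base relation for the edges of the prism allied graph. -/
def DtRel (n : ℕ) : DtV n → DtV n → Prop := fun a b =>
  ∃ i : Fin n,
    (a = .p i ∧ b = .q i) ∨ (a = .p i ∧ b = .p (finSucc i)) ∨
    (a = .q i ∧ b = .q (finSucc i)) ∨ (a = .r i ∧ b = .q i) ∨
    (a = .r i ∧ b = .q (finSucc i)) ∨ (a = .r i ∧ b = .s i)

/-- The prism allied graph `Dₙᵗ`. -/
def Dt (n : ℕ) : SimpleGraph (DtV n) := SimpleGraph.fromRel (DtRel n)

/-- Vertices of the web graph `Wₙ`. -/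
inductive WV (n : ℕ) : Type
  | p : Fin n → WV n
  | q : Fin n → WV n
  | r : Fin n → WV n
  deriving DecidableEq

/-- Base relation for the edges of the web graph. -/
def WRel (n : ℕ) : WV n → WV n → Prop := fun a b =>
  ∃ i : Fin n,
    (a = .p i ∧ b = .q i) ∨ (a = .p i ∧ b = .p (finSucc i)) ∨
    (a = .q i ∧ b = .q (finSucc i)) ∨ (a = .q i ∧ b = .r i)

/-- The web graph `Wₙ`. -/
def W (n : ℕ) : SimpleGraph (WV n) := SimpleGraph.fromRel (WRel n)

/-- Distance from a vertex to an (unordered) edge: `d(x, uv) = min (d x u) (d x v)`. -/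
noncomputable def edgeDist {V : Type*} (G : SimpleGraph V) (w : V) (e : Sym2 V) : ℕ :=
  Sym2.lift ⟨fun u v => min (G.dist w u) (G.dist w v), fun u v => min_comm _ _⟩ e

/-- Distance from a vertex to a mixed element (a vertex or an edge). -/
noncomputable def mixedDist {V : Type*} (G : SimpleGraph V) (w : V) :
    V ⊕ G.edgeSet → ℕ :=
  Sum.elim (G.dist w) (fun e => edgeDist G w e.1)

/-- `M` is a mixed metric generator: every two distinct elements of `V(G) ∪ E(G)` are
distinguished by some vertex of `M`. -/
def IsMixedMetricGen {V : Type*} (G : SimpleGraph V) (M : Set V) : Prop :=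
  ∀ a b : V ⊕ G.edgeSet, a ≠ b → ∃ w ∈ M, mixedDist G w a ≠ mixedDist G w b

/-- `M` is a (vertex) resolving set. -/
def IsResolving {V : Type*} (G : SimpleGraph V) (M : Set V) : Prop :=
  ∀ a b : V, a ≠ b → ∃ w ∈ M, G.dist w a ≠ G.dist w b

/-- `M` is an edge resolving set. -/
def IsEdgeResolving {V : Type*} (G : SimpleGraph V) (M : Set V) : Prop :=
  ∀ a b : G.edgeSet, a ≠ b → ∃ w ∈ M, edgeDist G w a.1 ≠ edgeDist G w b.1

/-- The metric dimension of `G`. -/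
noncomputable def metricDim {V : Type*} (G : SimpleGraph V) : ℕ :=
  sInf {k | ∃ M : Set V, IsResolving G M ∧ M.ncard = k}

/-- The edge metric dimension of `G`. -/
noncomputable def edgeMetricDim {V : Type*} (G : SimpleGraph V) : ℕ :=
  sInf {k | ∃ M : Set V, IsEdgeResolving G M ∧ M.ncard = k}

/-- The mixed metric dimension of `G`. -/
noncomputable def mixedMetricDim {V : Type*} (G : SimpleGraph V) : ℕ :=
  sInf {k | ∃ M : Set V, IsMixedMetricGen G M ∧ M.ncard = k}

/-!
Sending every `p i` to `q i` and fixing all other vertices maps each edge of `W n` to an edge or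
to a single vertex, so it does not increase distances. Hence a vertex `w` off the inner cycle
satisfies `d(w, q i) ≤ d(w, p i)`, i.e. `d(w, q i) = d(w, p i q i)`: only an inner vertex can
distinguish the vertex `q i` from the edge `p i q i`.
-/

namespace SimpleGraph

variable {V V' : Type*} {G : SimpleGraph V} {G' : SimpleGraph V'}

lemma exists_walk_map_length_le (f : V → V')
    (hf : ∀ ⦃a b⦄, G.Adj a b → f a = f b ∨ G'.Adj (f a) (f b)) {u v : V} (p : G.Walk u v) :
    ∃ q : G'.Walk (f u) (f v), q.length ≤ p.length := by
  induction p with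
  | nil => exact ⟨.nil, le_rfl⟩
  | cons h _ ih =>
    obtain ⟨q, hq⟩ := ih
    rcases hf h with heq | hadj
    · exact ⟨q.copy heq.symm rfl, by simpa using hq.trans (Nat.le_succ _)⟩
    · exact ⟨.cons hadj q, by simpa using hq⟩

lemma dist_map_le (f : V → V') (hf : ∀ ⦃a b⦄, G.Adj a b → f a = f b ∨ G'.Adj (f a) (f b))
    {u v : V} (h : G.Reachable u v) : G'.dist (f u) (f v) ≤ G.dist u v := by
  obtain ⟨p, hp⟩ := h.exists_walk_length_eq_dist
  obtain ⟨q, hq⟩ := exists_walk_map_length_le f hf p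
  exact (dist_le q).trans (hp ▸ hq)

end SimpleGraph

namespace WV

variable {n : ℕ}

def collapseInner : WV n → WV n
  | .p i => .q i
  | x => x

lemma adj_p_q (i : Fin n) : (W n).Adj (p i) (q i) :=
  ⟨by simp, Or.inl ⟨i, by simp⟩⟩

lemma collapseInner_adj {a b : WV n} (h : (W n).Adj a b) :
    collapseInner a = collapseInner b ∨ (W n).Adj (collapseInner a) (collapseInner b) := by
  have hrel : ∀ x y : WV n, x ≠ y → WRel n x y →
      collapseInner x = collapseInner y ∨ (W n).Adj (collapseInner x) (collapseInner y) := by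
    rintro x y hxy ⟨i, ⟨rfl, rfl⟩ | ⟨rfl, rfl⟩ | ⟨rfl, rfl⟩ | ⟨rfl, rfl⟩⟩
    · exact Or.inl rfl
    all_goals
      refine Or.inr ⟨?_, Or.inl ⟨i, by simp [collapseInner]⟩⟩
      simp_all [collapseInner]
  obtain ⟨hne, h | h⟩ := h
  · exact hrel a b hne h
  · exact (hrel b a hne.symm h).imp Eq.symm SimpleGraph.Adj.symm

lemma dist_q_le_dist_p {w : WV n} (hw : collapseInner w = w) (i : Fin n) :
    (W n).dist w (q i) ≤ (W n).dist w (p i) := by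
  by_cases hreach : (W n).Reachable w (p i)
  · have h := SimpleGraph.dist_map_le collapseInner (fun _ _ => collapseInner_adj) hreach
    rw [hw] at h
    exact h
  · have : ¬(W n).Reachable w (q i) := fun h => hreach (h.trans (adj_p_q i).symm.reachable)
    simp [SimpleGraph.dist_eq_zero_of_not_reachable this]

end WV

theorem stmt7 (n : ℕ) (hn : 4 ≤ n) (M : Set (WV n))
    (hM : IsMixedMetricGen (W n) M) : ∃ i : Fin n, WV.p i ∈ M := by
  let i : Fin n := ⟨0, by omega⟩
  obtain ⟨w, hwM, hw⟩ :=
    hM (.inl (WV.q i)) (.inr ⟨s(WV.p i, WV.q i), WV.adj_p_q i⟩) Sum.inl_ne_inr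
  simp only [mixedDist, edgeDist, Sum.elim_inl, Sum.elim_inr, Sym2.lift_mk] at hw
  cases w with
  | p j => exact ⟨j, hwM⟩
  | q j => exact absurd (min_eq_right (WV.dist_q_le_dist_p rfl i)).symm hw
  | r j => exact absurd (min_eq_right (WV.dist_q_le_dist_p rfl i)).symm hw
end

section
/- For the web graph W_n with n ≥ 4, every mixed metric generator has cardinality at least n + 1. -/
/-!
Separating the vertex `v` from the edge `uv` forces a vertex `w` of the generator with
`d(w, u) < d(w, v)`. For the pendant edge `qᵢrᵢ` only `w = rᵢ` does this, so all `n` pendant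
vertices lie in the generator. For the spoke `p₀q₀` no pendant vertex does it: contracting
every spoke `pᵢqᵢ` onto `qᵢ` does not increase distances and fixes each `rⱼ`, so
`d(rⱼ, q₀) ≤ d(rⱼ, p₀)`. Hence the generator has a further vertex.
-/

namespace SimpleGraph

variable {V V' : Type*} {G : SimpleGraph V} {H : SimpleGraph V'}

theorem eq_of_dist_lt_dist_of_forall_adj_eq {u v w : V} (huv : G.Adj u v)
    (hv : ∀ x, G.Adj v x → x = u) (h : G.dist w v < G.dist w u) : w = v := by
  by_contra hwv
  have hwu : G.Reachable w u := Reachable.of_dist_ne_zero (by omega)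
  obtain ⟨p, hp⟩ := (hwu.trans huv.reachable).symm.exists_walk_length_eq_dist
  obtain ⟨x, hvx, p', rfl⟩ := p.exists_eq_cons_of_ne (Ne.symm hwv)
  obtain rfl := hv x hvx
  have := dist_le p'
  rw [Walk.length_cons] at hp
  rw [dist_comm (u := w), dist_comm (u := w)] at h
  omega

theorem exists_walk_length_le_of_adj_imp {f : V → V'}
    (hf : ∀ a b, G.Adj a b → f a = f b ∨ H.Adj (f a) (f b)) {a b : V} (p : G.Walk a b) :
    ∃ q : H.Walk (f a) (f b), q.length ≤ p.length := by
  induction p with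
  | nil => exact ⟨Walk.nil, le_rfl⟩
  | @cons a c b hac p ih =>
    obtain ⟨q, hq⟩ := ih
    rw [Walk.length_cons]
    rcases hf a c hac with hfac | hfac
    · exact ⟨q.copy hfac.symm rfl, by rw [Walk.length_copy]; omega⟩
    · exact ⟨Walk.cons hfac q, by rw [Walk.length_cons]; omega⟩

theorem dist_le_dist_of_adj_imp {f : V → V'}
    (hf : ∀ a b, G.Adj a b → f a = f b ∨ H.Adj (f a) (f b)) {a b : V}
    (hab : G.Reachable a b) :
    H.dist (f a) (f b) ≤ G.dist a b := by
  obtain ⟨p, hp⟩ := hab.exists_walk_length_eq_dist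
  obtain ⟨q, hq⟩ := exists_walk_length_le_of_adj_imp hf p
  exact (dist_le q).trans (hp ▸ hq)

end SimpleGraph

theorem IsMixedMetricGen.exists_dist_lt {V : Type*} {G : SimpleGraph V} {M : Set V}
    (hM : IsMixedMetricGen G M) {u v : V} (huv : G.Adj u v) :
    ∃ w ∈ M, G.dist w u < G.dist w v := by
  obtain ⟨w, hwM, hw⟩ := hM (.inl v) (.inr ⟨s(u, v), huv⟩) (by simp)
  refine ⟨w, hwM, ?_⟩
  change G.dist w v ≠ min (G.dist w u) (G.dist w v) at hw
  omega

namespace WV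

variable {n : ℕ}

instance : Finite (WV n) :=
  Finite.of_injective (fun x : WV n => match x with
    | .p i => ((0 : Fin 3), i) | .q i => (1, i) | .r i => (2, i))
    (by rintro (a | a | a) (b | b | b) h <;> simp_all)

theorem r_injective : Function.Injective (WV.r : Fin n → WV n) := fun _ _ h => WV.r.inj h

theorem W_adj_p_q (i : Fin n) : (W n).Adj (.p i) (.q i) :=
  (SimpleGraph.fromRel_adj _ _ _).2 ⟨by simp, .inl ⟨i, by simp⟩⟩

theorem W_adj_r_q (i : Fin n) : (W n).Adj (.r i) (.q i) :=
  (SimpleGraph.fromRel_adj _ _ _).2 ⟨by simp, .inr ⟨i, by simp⟩⟩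

theorem eq_q_of_W_adj_r {i : Fin n} {x : WV n} (h : (W n).Adj (.r i) x) : x = .q i := by
  obtain ⟨-, ⟨j, h⟩ | ⟨j, h⟩⟩ := h <;> simp_all

def collapseP : WV n → WV n
  | .p i => .q i
  | x => x

theorem collapseP_adj {a b : WV n} (h : (W n).Adj a b) :
    collapseP a = collapseP b ∨ (W n).Adj (collapseP a) (collapseP b) := by
  by_cases hab : collapseP a = collapseP b
  · exact .inl hab
  refine .inr ((SimpleGraph.fromRel_adj _ _ _).2 ⟨hab, ?_⟩)
  obtain ⟨-, ⟨j, h⟩ | ⟨j, h⟩⟩ := h <;>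
    rcases h with ⟨rfl, rfl⟩ | ⟨rfl, rfl⟩ | ⟨rfl, rfl⟩ | ⟨rfl, rfl⟩ <;>
    simp_all [collapseP, WRel]

theorem dist_r_q_le_dist_r_p {i j : Fin n} (h : (W n).Reachable (.r j) (.p i)) :
    (W n).dist (.r j) (.q i) ≤ (W n).dist (.r j) (.p i) :=
  SimpleGraph.dist_le_dist_of_adj_imp (f := collapseP) (fun _ _ => collapseP_adj) h

end WV

open WV in
theorem stmt8 (n : ℕ) (hn : 4 ≤ n) (M : Set (WV n))
    (hM : IsMixedMetricGen (W n) M) : n + 1 ≤ M.ncard := by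
  have hr : Set.range WV.r ⊆ M := by
    rintro _ ⟨i, rfl⟩
    obtain ⟨w, hwM, hw⟩ := hM.exists_dist_lt (W_adj_r_q i)
    rwa [← (W n).eq_of_dist_lt_dist_of_forall_adj_eq (W_adj_r_q i).symm
      (fun _ => eq_q_of_W_adj_r) hw]
  let i₀ : Fin n := ⟨0, by omega⟩
  obtain ⟨w, hwM, hw⟩ := hM.exists_dist_lt (W_adj_p_q i₀)
  have hw_r : w ∉ Set.range WV.r := by
    rintro ⟨j, rfl⟩
    have hreach : (W n).Reachable (.r j) (.p i₀) :=
      (SimpleGraph.Reachable.of_dist_ne_zero (v := .q i₀) (by omega)).trans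
        (W_adj_p_q i₀).symm.reachable
    exact (dist_r_q_le_dist_r_p hreach).not_gt hw
  calc n + 1 = (insert w (Set.range WV.r)).ncard := by
        rw [Set.ncard_insert_of_notMem hw_r, Set.ncard_range_of_injective r_injective,
          Nat.card_fin]
    _ ≤ M.ncard := Set.ncard_le_ncard (Set.insert_subset hwM hr)
end

section
/- For the web graph W_n with n ≥ 4, the set {p_1, r_1, r_2, ..., r_n} is an independent set of vertices that is a mixed metric generator; hence W_n admits an independent mixed metric generator of cardinality n + 1. -/
/-!
Distances in `W n` are the cycle distance between indices plus the number of layers crossed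
(`p` outer, `q` inner, `r` pendant). Seen from the pendant vertices `r k`, an element of
`V ∪ E` is at minimal distance exactly from the `r`'s at the indices of its endpoints; for
`n ≥ 3` this pins down its index `j`, and the distances from `r j` and `r (j + 1)` then
determine the element, except that `q j` and the edge `p j q j` look alike from every `r k`.
The vertex `p i` separates these two, being one step closer to the edge.
-/

section CyclicIndex

variable {n : ℕ}

lemma finSucc_val (i : Fin n) : (finSucc i).val = if i.val + 1 = n then 0 else i.val + 1 := by
  unfold finSucc
  split_ifs with h
  · simp [h]
  · exact Nat.mod_eq_of_lt (by omega)

lemma finSucc_injective : Function.Injective (finSucc (n := n)) := by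
  intro a b h
  have h' := congrArg Fin.val h
  rw [finSucc_val, finSucc_val] at h'
  ext
  split_ifs at h' <;> omega

lemma finSucc_surjective : Function.Surjective (finSucc (n := n)) :=
  Finite.surjective_of_injective finSucc_injective

lemma finSucc_ne_self (hn : 2 ≤ n) (i : Fin n) : finSucc i ≠ i := by
  intro h
  have h' := congrArg Fin.val h
  rw [finSucc_val] at h'
  split_ifs at h' <;> omega

lemma finSucc_finSucc_ne_self (hn : 3 ≤ n) (i : Fin n) : finSucc (finSucc i) ≠ i := by
  intro h
  have h' := congrArg Fin.val h
  rw [finSucc_val, finSucc_val] at h'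
  split_ifs at h' <;> omega

def cycDist (i j : Fin n) : ℕ := min (Nat.dist i j) (n - Nat.dist i j)

lemma cycDist_self (i : Fin n) : cycDist i i = 0 := by simp [cycDist]

lemma cycDist_eq_zero_iff {i j : Fin n} : cycDist i j = 0 ↔ i = j := by
  have := i.isLt; have := j.isLt
  simp only [cycDist, Nat.dist, Fin.ext_iff]
  omega

lemma cycDist_finSucc_self (hn : 2 ≤ n) (i : Fin n) : cycDist (finSucc i) i = 1 := by
  have := i.isLt
  simp only [cycDist, Nat.dist, finSucc_val]
  split_ifs <;> omega

lemma cycDist_finSucc_le (i j : Fin n) : cycDist (finSucc i) j ≤ cycDist i j + 1 := by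
  have := i.isLt; have := j.isLt
  simp only [cycDist, Nat.dist, finSucc_val]
  split_ifs <;> omega

lemma cycDist_le_finSucc (i j : Fin n) : cycDist i j ≤ cycDist (finSucc i) j + 1 := by
  have := i.isLt; have := j.isLt
  simp only [cycDist, Nat.dist, finSucc_val]
  split_ifs <;> omega

lemma exists_cycDist_step {i j : Fin n} (hij : i ≠ j) :
    ∃ i', (i' = finSucc i ∨ finSucc i' = i) ∧ cycDist i' j + 1 = cycDist i j := by
  obtain ⟨i₀, rfl⟩ := finSucc_surjective i
  have hstep : cycDist (finSucc (finSucc i₀)) j + 1 = cycDist (finSucc i₀) j ∨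
      cycDist i₀ j + 1 = cycDist (finSucc i₀) j := by
    have := i₀.isLt; have := j.isLt
    have hne := mt Fin.ext hij
    simp only [cycDist, Nat.dist, finSucc_val] at hne ⊢
    split_ifs at hne ⊢ <;> omega
  rcases hstep with h | h
  · exact ⟨_, .inl rfl, h⟩
  · exact ⟨_, .inr rfl, h⟩

end CyclicIndex

theorem SimpleGraph.dist_eq_of_adj_le_of_exists_adj {V : Type*} {G : SimpleGraph V}
    (D : V → V → ℕ) (h_self : ∀ x, D x x = 0)
    (h_adj : ∀ x y z, G.Adj x y → D x z ≤ D y z + 1)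
    (h_step : ∀ x z, x ≠ z → ∃ y, G.Adj x y ∧ D y z + 1 = D x z) (x z : V) :
    G.dist x z = D x z := by
  have le_length : ∀ {x y} (w : G.Walk x y), D x y ≤ w.length := by
    intro x y w
    induction w with
    | nil => simp [h_self]
    | cons hxy w ih => simpa using (h_adj _ _ _ hxy).trans (Nat.add_le_add_right ih 1)
  have walk_of_eq : ∀ m x, D x z = m → ∃ w : G.Walk x z, w.length = m := by
    intro m
    induction m with
    | zero =>
      intro x hx
      by_cases hxz : x = z
      · subst hxz; exact ⟨.nil, rfl⟩
      · obtain ⟨y, -, hy⟩ := h_step x z hxz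
        omega
    | succ m ih =>
      intro x hx
      have hxz : x ≠ z := by rintro rfl; simp [h_self] at hx
      obtain ⟨y, hxy, hy⟩ := h_step x z hxz
      obtain ⟨w, hw⟩ := ih y (by omega)
      exact ⟨.cons hxy w, by simp [hw]⟩
  obtain ⟨w, hw⟩ := walk_of_eq _ x rfl
  obtain ⟨w', hw'⟩ := w.reachable.exists_walk_length_eq_dist
  exact le_antisymm (hw ▸ G.dist_le w) (hw' ▸ le_length w')

theorem SimpleGraph.exists_adj_cycDist_step {V : Type*} {G : SimpleGraph V} {n : ℕ}
    {f : Fin n → V} (hf : ∀ i, G.Adj (f i) (f (finSucc i))) {i j : Fin n} (hij : i ≠ j) :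
    ∃ i', G.Adj (f i) (f i') ∧ cycDist i' j + 1 = cycDist i j := by
  obtain ⟨i', rfl | rfl, h⟩ := exists_cycDist_step hij
  · exact ⟨_, hf i, h⟩
  · exact ⟨i', (hf i').symm, h⟩

namespace W

variable {n : ℕ}

lemma adj_pq (i : Fin n) : (W n).Adj (.p i) (.q i) := by
  rw [W, SimpleGraph.fromRel_adj]
  exact ⟨by simp, .inl ⟨i, .inl ⟨rfl, rfl⟩⟩⟩

lemma adj_qr (i : Fin n) : (W n).Adj (.q i) (.r i) := by
  rw [W, SimpleGraph.fromRel_adj]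
  exact ⟨by simp, .inl ⟨i, .inr (.inr (.inr ⟨rfl, rfl⟩))⟩⟩

lemma adj_pp (hn : 2 ≤ n) (i : Fin n) : (W n).Adj (.p i) (.p (finSucc i)) := by
  rw [W, SimpleGraph.fromRel_adj]
  exact ⟨by simpa using (finSucc_ne_self hn i).symm, .inl ⟨i, .inr (.inl ⟨rfl, rfl⟩)⟩⟩

lemma adj_qq (hn : 2 ≤ n) (i : Fin n) : (W n).Adj (.q i) (.q (finSucc i)) := by
  rw [W, SimpleGraph.fromRel_adj]
  exact ⟨by simpa using (finSucc_ne_self hn i).symm,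
    .inl ⟨i, .inr (.inr (.inl ⟨rfl, rfl⟩))⟩⟩

lemma eq_q_of_adj_r {i : Fin n} {x : WV n} (h : (W n).Adj (.r i) x) : x = .q i := by
  rw [W, SimpleGraph.fromRel_adj] at h
  obtain ⟨-, ⟨j, h⟩ | ⟨j, h⟩⟩ := h <;> simp_all

def webDist : WV n → WV n → ℕ
  | .p i, .p j => cycDist i j
  | .p i, .q j => cycDist i j + 1
  | .p i, .r j => cycDist i j + 2
  | .q i, .p j => cycDist i j + 1
  | .q i, .q j => cycDist i j
  | .q i, .r j => cycDist i j + 1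
  | .r i, .p j => cycDist i j + 2
  | .r i, .q j => cycDist i j + 1
  | .r i, .r j => if i = j then 0 else cycDist i j + 2

lemma webDist_self (x : WV n) : webDist x x = 0 := by
  cases x <;> simp [webDist, cycDist_self]

lemma webDist_le_of_adj {x y : WV n} (h : (W n).Adj x y) (z : WV n) :
    webDist x z ≤ webDist y z + 1 := by
  rw [W, SimpleGraph.fromRel_adj] at h
  obtain ⟨-, ⟨i, h⟩ | ⟨i, h⟩⟩ := h <;>
    rcases h with ⟨rfl, rfl⟩ | ⟨rfl, rfl⟩ | ⟨rfl, rfl⟩ | ⟨rfl, rfl⟩ <;>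
    cases z with
  | _ j =>
    have := cycDist_finSucc_le i j
    have := cycDist_le_finSucc i j
    simp only [webDist]
    try split_ifs with hij
    all_goals first | omega | (subst hij; simp [cycDist_self])

lemma exists_adj_webDist_step (hn : 2 ≤ n) {x z : WV n} (hxz : x ≠ z) :
    ∃ y, (W n).Adj x y ∧ webDist y z + 1 = webDist x z := by
  rcases x with i | i | i
  case r => exact ⟨.q i, (adj_qr i).symm, by cases z <;> simp_all [webDist]⟩
  all_goals rcases z with j | j | j <;> by_cases hij : i = j
  all_goals first
    | (subst hij
       first
        | exact absurd rfl hxz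
        | exact ⟨.q i, adj_pq i, rfl⟩
        | exact ⟨.p i, (adj_pq i).symm, rfl⟩
        | exact ⟨.r i, adj_qr i, by simp [webDist, cycDist_self]⟩)
    | (obtain ⟨i', hadj, h⟩ := SimpleGraph.exists_adj_cycDist_step (adj_pp hn) hij
       exact ⟨_, hadj, by simp only [webDist]; omega⟩)
    | (obtain ⟨i', hadj, h⟩ := SimpleGraph.exists_adj_cycDist_step (adj_qq hn) hij
       exact ⟨_, hadj, by simp only [webDist]; omega⟩)

lemma dist_eq_webDist (hn : 2 ≤ n) (x y : WV n) : (W n).dist x y = webDist x y :=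
  SimpleGraph.dist_eq_of_adj_le_of_exists_adj webDist webDist_self
    (fun _ _ z h => webDist_le_of_adj h z) (fun _ _ h => exists_adj_webDist_step hn h) x y

inductive Element (n : ℕ) : Type
  | p (j : Fin n) | q (j : Fin n) | r (j : Fin n)
  | pq (j : Fin n) | pp (j : Fin n) | qq (j : Fin n) | qr (j : Fin n)

namespace Element

def toSum (hn : 2 ≤ n) : Element n → WV n ⊕ (W n).edgeSet
  | p j => .inl (.p j)
  | q j => .inl (.q j)
  | r j => .inl (.r j)
  | pq j => .inr ⟨s(.p j, .q j), adj_pq j⟩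
  | pp j => .inr ⟨s(.p j, .p (finSucc j)), adj_pp hn j⟩
  | qq j => .inr ⟨s(.q j, .q (finSucc j)), adj_qq hn j⟩
  | qr j => .inr ⟨s(.q j, .r j), adj_qr j⟩

lemma exists_eq_toSum (hn : 2 ≤ n) (a : WV n ⊕ (W n).edgeSet) :
    ∃ e : Element n, a = e.toSum hn := by
  rcases a with (j | j | j) | ⟨e, he⟩
  · exact ⟨p j, rfl⟩
  · exact ⟨q j, rfl⟩
  · exact ⟨r j, rfl⟩
  induction e using Sym2.ind with
  | _ x y =>
    have hxy : (W n).Adj x y := he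
    rw [W, SimpleGraph.fromRel_adj] at hxy
    obtain ⟨-, ⟨i, h⟩ | ⟨i, h⟩⟩ := hxy <;>
      rcases h with ⟨rfl, rfl⟩ | ⟨rfl, rfl⟩ | ⟨rfl, rfl⟩ | ⟨rfl, rfl⟩
    all_goals first
      | exact ⟨pq i, rfl⟩ | exact ⟨pp i, rfl⟩
      | exact ⟨qq i, rfl⟩ | exact ⟨qr i, rfl⟩
      | exact ⟨pq i, congrArg Sum.inr (Subtype.ext Sym2.eq_swap)⟩
      | exact ⟨pp i, congrArg Sum.inr (Subtype.ext Sym2.eq_swap)⟩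
      | exact ⟨qq i, congrArg Sum.inr (Subtype.ext Sym2.eq_swap)⟩
      | exact ⟨qr i, congrArg Sum.inr (Subtype.ext Sym2.eq_swap)⟩

def rDist : Element n → Fin n → ℕ
  | p j, k => cycDist k j + 2
  | q j, k => cycDist k j + 1
  | r j, k => if k = j then 0 else cycDist k j + 2
  | pq j, k => cycDist k j + 1
  | pp j, k => min (cycDist k j) (cycDist k (finSucc j)) + 2
  | qq j, k => min (cycDist k j) (cycDist k (finSucc j)) + 1
  | qr j, k => if k = j then 0 else cycDist k j + 1

lemma mixedDist_r_toSum (hn : 2 ≤ n) (k : Fin n) (e : Element n) :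
    mixedDist (W n) (.r k) (e.toSum hn) = e.rDist k := by
  cases e <;>
    simp only [toSum, mixedDist, Sum.elim_inl, Sum.elim_inr, edgeDist, Sym2.lift_mk,
      dist_eq_webDist hn, webDist, rDist]
  all_goals (try split_ifs) <;> omega

lemma mixedDist_p_toSum_q (hn : 2 ≤ n) (i j : Fin n) :
    mixedDist (W n) (.p i) ((q j).toSum hn) =
      mixedDist (W n) (.p i) ((pq j).toSum hn) + 1 := by
  simp [toSum, mixedDist, edgeDist, dist_eq_webDist hn, webDist]

def rDistMin : Element n → ℕ
  | p _ => 2 | q _ => 1 | r _ => 0 | pq _ => 1 | pp _ => 2 | qq _ => 1 | qr _ => 0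

def anchor : Element n → Fin n
  | p j | q j | r j | pq j | pp j | qq j | qr j => j

def indices : Element n → Set (Fin n)
  | pp j | qq j => {j, finSucc j}
  | e => {e.anchor}

lemma rDistMin_le_rDist (e : Element n) (k : Fin n) : e.rDistMin ≤ e.rDist k := by
  cases e <;> simp only [rDistMin, rDist] <;> (try split_ifs) <;> omega

lemma rDist_eq_rDistMin_iff (e : Element n) (k : Fin n) :
    e.rDist k = e.rDistMin ↔ k ∈ e.indices := by
  cases e <;> simp [rDist, rDistMin, indices, anchor, cycDist_eq_zero_iff]

lemma anchor_mem_indices (e : Element n) : e.anchor ∈ e.indices := by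
  cases e <;> simp [indices, anchor]

lemma eq_finSucc_of_mem_indices {e : Element n} {k : Fin n} (hk : k ∈ e.indices)
    (hne : k ≠ e.anchor) : k = finSucc e.anchor := by
  cases e <;> simp_all [indices, anchor]

def rDistNext : Element n → ℕ
  | p _ => 3 | q _ => 2 | r _ => 3 | pq _ => 2 | pp _ => 2 | qq _ => 1 | qr _ => 2

lemma rDist_finSucc_anchor (hn : 2 ≤ n) (e : Element n) :
    e.rDist (finSucc e.anchor) = e.rDistNext := by
  cases e <;>
    simp [rDist, rDistNext, anchor, cycDist_finSucc_self hn, cycDist_self, finSucc_ne_self hn]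

lemma anchor_eq_of_rDist_eq (hn : 3 ≤ n) {a b : Element n} (h : a.rDist = b.rDist) :
    a.anchor = b.anchor := by
  have ha := (rDist_eq_rDistMin_iff a a.anchor).2 (anchor_mem_indices a)
  have hb := (rDist_eq_rDistMin_iff b b.anchor).2 (anchor_mem_indices b)
  have hmin : a.rDistMin = b.rDistMin := by
    have h₁ := rDistMin_le_rDist b a.anchor
    have h₂ := rDistMin_le_rDist a b.anchor
    rw [h] at h₂ ha
    omega
  have hba : b.anchor ∈ a.indices := (rDist_eq_rDistMin_iff a _).1 (by rw [h, hb, hmin])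
  have hab : a.anchor ∈ b.indices := (rDist_eq_rDistMin_iff b _).1 (by rw [← h, ha, hmin])
  -- two distinct anchors would each be the `finSucc` of the other
  by_contra hne
  have h₁ := eq_finSucc_of_mem_indices hba (Ne.symm hne)
  have h₂ := eq_finSucc_of_mem_indices hab hne
  exact finSucc_finSucc_ne_self hn a.anchor (by rw [← h₁, ← h₂])

lemma eq_of_rDist_eq (hn : 3 ≤ n) {a b : Element n} (h : a.rDist = b.rDist) :
    a = b ∨ ∃ j, (a = q j ∧ b = pq j) ∨ (a = pq j ∧ b = q j) := by
  have hanchor := anchor_eq_of_rDist_eq hn h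
  have hmin : a.rDistMin = b.rDistMin := by
    rw [← (rDist_eq_rDistMin_iff a _).2 (anchor_mem_indices a),
      ← (rDist_eq_rDistMin_iff b _).2 (anchor_mem_indices b), h, hanchor]
  have hnext : a.rDistNext = b.rDistNext := by
    rw [← rDist_finSucc_anchor (by omega), ← rDist_finSucc_anchor (by omega), h, hanchor]
  clear h
  cases a <;> cases b <;> simp_all [anchor, rDistMin, rDistNext]

end Element

lemma not_adj_of_mem_p_union_range_r (i : Fin n) {a b : WV n}
    (ha : a ∈ ({WV.p i} ∪ Set.range WV.r : Set (WV n)))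
    (hb : b ∈ ({WV.p i} ∪ Set.range WV.r : Set (WV n))) : ¬ (W n).Adj a b := by
  intro hadj
  rcases ha with rfl | ⟨k, rfl⟩
  · rcases hb with rfl | ⟨l, rfl⟩
    · exact hadj.ne rfl
    · simpa using eq_q_of_adj_r hadj.symm
  · rcases hb with rfl | ⟨l, rfl⟩ <;> simpa using eq_q_of_adj_r hadj

theorem isMixedMetricGen_p_union_range_r (hn : 3 ≤ n) (i : Fin n) :
    IsMixedMetricGen (W n) ({WV.p i} ∪ Set.range WV.r) := by
  intro a b hab
  obtain ⟨a, rfl⟩ := Element.exists_eq_toSum (by omega) a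
  obtain ⟨b, rfl⟩ := Element.exists_eq_toSum (by omega) b
  by_cases hr : a.rDist = b.rDist
  · rcases Element.eq_of_rDist_eq hn hr with rfl | ⟨j, ⟨rfl, rfl⟩ | ⟨rfl, rfl⟩⟩
    · exact absurd rfl hab
    · exact ⟨.p i, .inl rfl, by rw [Element.mixedDist_p_toSum_q]; omega⟩
    · exact ⟨.p i, .inl rfl, by rw [Element.mixedDist_p_toSum_q]; omega⟩
  · obtain ⟨k, hk⟩ := Function.ne_iff.1 hr
    refine ⟨.r k, .inr ⟨k, rfl⟩, ?_⟩
    rwa [Element.mixedDist_r_toSum, Element.mixedDist_r_toSum]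

lemma ncard_p_union_range_r (i : Fin n) :
    ({WV.p i} ∪ Set.range WV.r : Set (WV n)).ncard = n + 1 := by
  rw [Set.singleton_union, Set.ncard_insert_of_notMem (by simp) (Set.finite_range _),
    Set.ncard_range_of_injective (fun _ _ h => by injection h), Nat.card_eq_fintype_card,
    Fintype.card_fin]

end W

theorem stmt11 (n : ℕ) (hn : 4 ≤ n) :
    (∀ a ∈ ({WV.p ⟨0, by omega⟩} ∪ Set.range WV.r : Set (WV n)),
      ∀ b ∈ ({WV.p ⟨0, by omega⟩} ∪ Set.range WV.r : Set (WV n)), ¬ (W n).Adj a b) ∧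
    IsMixedMetricGen (W n) ({WV.p ⟨0, by omega⟩} ∪ Set.range WV.r) ∧
    ({WV.p ⟨0, by omega⟩} ∪ Set.range WV.r : Set (WV n)).ncard = n + 1 :=
  ⟨fun _ ha _ hb => W.not_adj_of_mem_p_union_range_r _ ha hb,
    W.isMixedMetricGen_p_union_range_r (by omega) _, W.ncard_p_union_range_r _⟩
end
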